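/- Let q be a prime power, k ≥ 0, and suppose e is a (q,k)-critical element of a (q,k)-overfull matroid M. Then either e lies on a line of M with at least q² + 2 points, or e lies on at least (q^{2k} - 1)/(q² - 1) + 1 lines of M each having at least q + 2 points. -/

import Mathlib

/-!
Contracting a loop keeps the rank and does not lose points, so a critical `e` is a nonloop.
Every point other than `cl {e}` lies on a line through `e`, giving
`ε(M) ≤ 1 + ∑_{L ∋ e} (ε(L) - 1)`, and the lines through `e` are distinct points of `M ／ e`.
If no line through `e` had more than `q² + 1` points and at most `D = (q^{2k}-1)/(q²-1)` of them
had `q + 2` or more, then `ε(M) ≤ 1 + q ε(M ／ e) + (q² - q) D`. The overfullness threshold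
`T(r)` satisfies exactly `T(r + 1) = 1 + q T(r) + (q² - q) D`, so `M ／ e` would be overfull.
-/

open Matroid Set

namespace GrowthRate

variable {α : Type*}

/-- The rank of a set in a matroid: the supremum of cardinalities of independent subsets. -/
noncomputable def eRk (M : Matroid α) (X : Set α) : ℕ∞ :=
  ⨆ I ∈ {I : Set α | M.Indep I ∧ I ⊆ X}, I.encard

/-- The rank of a matroid. -/
noncomputable def eRank (M : Matroid α) : ℕ∞ := eRk M M.E

/-- Rank as a natural number (for finite matroids). -/
noncomputable def rk (M : Matroid α) (X : Set α) : ℕ := (eRk M X).toNat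

/-- Rank of a matroid as a natural number. -/
noncomputable def rank (M : Matroid α) : ℕ := (eRank M).toNat

/-- Deletion of a set of elements. -/
noncomputable def delete (M : Matroid α) (D : Set α) : Matroid α := M ↾ (M.E \ D)

/-- Contraction of a set of elements, defined via duality. -/
noncomputable def contract (M : Matroid α) (C : Set α) : Matroid α := (delete M✶ C)✶

/-- `N` is a minor of `M` if it is obtained by a contraction followed by a deletion. -/
def IsMinor (N M : Matroid α) : Prop := ∃ C D : Set α, N = delete (contract M C) D

/-- The number of points (rank-one flats) of `M` contained in `X`. -/
noncomputable def nPoints (M : Matroid α) (X : Set α) : ℕ :=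
  {P : Set α | M.IsFlat P ∧ eRk M P = 1 ∧ P ⊆ X}.ncard

/-- `ε(M)`: the number of points (rank-one flats) of `M`. -/
noncomputable def eps (M : Matroid α) : ℕ := {P : Set α | M.IsFlat P ∧ eRk M P = 1}.ncard

/-- A matroid is simple if all singletons and pairs of ground elements are independent. -/
def Simple (M : Matroid α) : Prop :=
  ∀ e ∈ M.E, ∀ f ∈ M.E, M.Indep {e} ∧ (e ≠ f → M.Indep {e, f})

/-- `M` has a `U_{2,m}`-minor: a minor that is simple of rank two with `m` elements. -/
def HasUnifLineMinor (M : Matroid α) (m : ℕ) : Prop :=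
  ∃ N : Matroid α, IsMinor N M ∧ eRank N = 2 ∧ Simple N ∧ N.E.encard = m

/-- A matroid is weakly round if its ground set is not the union of a set of rank
at most `r(M)-2` and a set of rank at most `r(M)-1`. -/
def WeaklyRound (M : Matroid α) : Prop :=
  ¬ ∃ A B : Set α, A ∪ B = M.E ∧ eRk M A + 2 ≤ eRank M ∧ eRk M B + 1 ≤ eRank M

/-- `q` is a prime power. -/
def IsPrimePower (q : ℕ) : Prop := ∃ p n : ℕ, p.Prime ∧ 0 < n ∧ q = p ^ n

/-- `M` is isomorphic to the projective geometry `PG(n-1, |F|)` over the finite field `F`: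
there is a representation `f` of `M` by vectors in `F^n` such that distinct elements get
non-parallel vectors and every direction in `F^n` is represented. -/
def IsPG (M : Matroid α) (F : Type) [Field F] [Fintype F] (n : ℕ) : Prop :=
  ∃ f : α → (Fin n → F),
    (∀ I ⊆ M.E, (M.Indep I ↔ LinearIndependent F (fun x : I => f x))) ∧
    (∀ e ∈ M.E, ∀ e' ∈ M.E, ∀ c : F, f e' = c • f e → e = e') ∧
    (∀ v : Fin n → F, v ≠ 0 → ∃ e ∈ M.E, ∃ c : F, c ≠ 0 ∧ v = c • f e)

/-- `M` is `(q,k)`-overfull. -/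
noncomputable def Overfull (M : Matroid α) (q k : ℕ) : Prop :=
  ((q : ℚ) ^ (rank M + k) - 1) / ((q : ℚ) - 1)
      - (q : ℚ) * ((q : ℚ) ^ (2 * k) - 1) / ((q : ℚ) ^ 2 - 1) < (eps M : ℚ)

end GrowthRate

namespace Matroid

variable {α : Type*} {M : Matroid α} {C F : Set α}

lemma eRk_contract_add_eRk (M : Matroid α) (C X : Set α) :
    (M ／ C).eRk X + M.eRk C = M.eRk (X ∪ C) := by
  obtain ⟨J, hJ⟩ := M.exists_isBasis' C
  obtain ⟨I, hI, hJI⟩ := hJ.indep.subset_isBasis'_of_subset (hJ.subset.trans subset_union_right)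
  have hIC : (M ／ C).IsBasis' (I \ C) ((X ∪ C) \ C) :=
    hI.contract_isBasis' hJ (hI.indep.subset (union_subset sdiff_subset hJI))
  have hJeq : J = I ∩ C :=
    hJ.eq_of_subset_indep (hI.indep.subset inter_subset_left) (subset_inter hJI hJ.subset)
      inter_subset_right
  have hX : (M ／ C).eRk X = (M ／ C).eRk ((X ∪ C) \ C) := by
    rw [← eRk_inter_ground, eq_comm, ← eRk_inter_ground, contract_ground]
    congr 1
    tauto_set
  rw [hX, hIC.eRk_eq_encard, hJ.eRk_eq_encard, hI.eRk_eq_encard, hJeq,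
    encard_sdiff_add_encard_inter]

lemma eRank_contract_add_eRk (M : Matroid α) (C : Set α) :
    (M ／ C).eRank + M.eRk C = M.eRank := by
  rw [← eRk_eq_eRank (contract_ground_subset_ground M C), eRk_contract_add_eRk,
    eRk_eq_eRank subset_union_left]

lemma IsFlat.contract_sdiff (hF : M.IsFlat F) (hCF : C ⊆ F) : (M ／ C).IsFlat (F \ C) := by
  rw [isFlat_iff_closure_eq, contract_closure_eq, sdiff_union_of_subset hCF, hF.closure]

lemma finite_of_forall_isFlat [M.Finite] {S : Set (Set α)} (hS : ∀ F ∈ S, M.IsFlat F) :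
    S.Finite :=
  M.ground_finite.finite_subsets.subset fun F hF ↦ (hS F hF).subset_ground

lemma ncard_isFlat_superset_le [M.Finite] (C : Set α) (r : ℕ∞) :
    {F | M.IsFlat F ∧ C ⊆ F ∧ M.eRk F = r + M.eRk C}.ncard ≤
      {F | (M ／ C).IsFlat F ∧ (M ／ C).eRk F = r}.ncard := by
  refine ncard_le_ncard_of_injOn (· \ C) ?_ ?_ (finite_of_forall_isFlat fun F hF ↦ hF.1)
  · rintro F ⟨hF, hCF, hr⟩
    refine ⟨hF.contract_sdiff hCF, ?_⟩
    have h := M.eRk_contract_add_eRk C (F \ C)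
    rw [sdiff_union_of_subset hCF, hr] at h
    exact WithTop.add_right_cancel (M.isRkFinite_set C).eRk_lt_top.ne h
  · rintro F₁ ⟨-, hCF₁, -⟩ F₂ ⟨-, hCF₂, -⟩ (h : F₁ \ C = F₂ \ C)
    rw [← sdiff_union_of_subset hCF₁, h, sdiff_union_of_subset hCF₂]

end Matroid

namespace GrowthRate

variable {α : Type*} {M : Matroid α} {X P L : Set α} {e : α} {q k : ℕ}

lemma eRk_eq_matroid_eRk (M : Matroid α) (X : Set α) : eRk M X = M.eRk X := by
  refine le_antisymm (iSup₂_le fun I hI ↦ hI.1.encard_le_eRk_of_subset hI.2) ?_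
  obtain ⟨I, hI⟩ := M.exists_isBasis' X
  rw [← hI.encard_eq_eRk]
  exact le_biSup (fun I ↦ I.encard) (show I ∈ {I | M.Indep I ∧ I ⊆ X} from ⟨hI.indep, hI.subset⟩)

lemma rank_eq_toNat_eRank (M : Matroid α) : rank M = M.eRank.toNat := by
  rw [rank, eRank, eRk_eq_matroid_eRk, eRk_ground]

lemma contract_eq (M : Matroid α) (C : Set α) : contract M C = M ／ C := rfl

def points (M : Matroid α) : Set (Set α) := {P | M.IsFlat P ∧ M.eRk P = 1}

def linesThrough (M : Matroid α) (e : α) : Set (Set α) := {L | M.IsFlat L ∧ M.eRk L = 2 ∧ e ∈ L}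

lemma eps_eq_ncard_points (M : Matroid α) : eps M = (points M).ncard := by
  simp only [eps, points, eRk_eq_matroid_eRk]

lemma nPoints_eq_ncard (M : Matroid α) (X : Set α) :
    nPoints M X = {P ∈ points M | P ⊆ X}.ncard := by
  simp only [nPoints, points, eRk_eq_matroid_eRk, mem_ofPred_eq, and_assoc]

lemma finite_points (M : Matroid α) [M.Finite] : (points M).Finite :=
  finite_of_forall_isFlat fun _ hP ↦ hP.1

lemma finite_linesThrough (M : Matroid α) [M.Finite] (e : α) : (linesThrough M e).Finite :=
  finite_of_forall_isFlat fun _ hL ↦ hL.1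

lemma eps_le_eps_contract_of_isLoop [M.Finite] (he : M.IsLoop e) : eps M ≤ eps (M ／ {e}) := by
  rw [eps_eq_ncard_points, eps_eq_ncard_points]
  refine (congrArg ncard ?_).trans_le (ncard_isFlat_superset_le (M := M) {e} 1)
  ext F
  simp only [points, mem_ofPred_eq, he.eRk_eq, add_zero, singleton_subset_iff]
  exact ⟨fun h ↦ ⟨h.1, he.mem_of_isFlat h.1, h.2⟩, fun h ↦ ⟨h.1, h.2.2⟩⟩

lemma ncard_linesThrough_le_eps_contract [M.Finite] (he : M.IsNonloop e) :
    (linesThrough M e).ncard ≤ eps (M ／ {e}) := by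
  rw [eps_eq_ncard_points]
  refine (congrArg ncard ?_).trans_le (ncard_isFlat_superset_le (M := M) {e} 1)
  ext L
  simp only [linesThrough, mem_ofPred_eq, he.eRk_eq, singleton_subset_iff]
  exact ⟨fun h ↦ ⟨h.1, h.2.2, h.2.1⟩, fun h ↦ ⟨h.1, h.2.2, h.2.1⟩⟩

lemma rank_contract_add_eRk [M.RankFinite] (C : Set α) :
    rank (contract M C) + (M.eRk C).toNat = rank M := by
  rw [rank_eq_toNat_eRank, rank_eq_toNat_eRank, contract_eq, ← ENat.toNat_add
    ((M ／ C).eRank_ne_top_iff.2 inferInstance) (M.isRkFinite_set C).eRk_lt_top.ne,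
    eRank_contract_add_eRk]

lemma closure_singleton_mem_points (he : M.IsNonloop e) : M.closure {e} ∈ points M :=
  ⟨isFlat_closure _, by rw [eRk_closure_eq, he.eRk_eq]⟩

lemma closure_singleton_subset_of_mem_linesThrough (hL : L ∈ linesThrough M e) :
    M.closure {e} ⊆ L :=
  (M.closure_subset_closure (singleton_subset_iff.2 hL.2.2)).trans_eq hL.1.closure

lemma eq_closure_singleton_of_mem_points (he : M.IsNonloop e) (hP : P ∈ points M) (heP : e ∈ P) :
    P = M.closure {e} := by
  rw [← hP.1.closure]
  exact (M.isRkFinite_singleton.closure_eq_closure_of_subset_of_eRk_ge_eRk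
    (singleton_subset_iff.2 heP) (by rw [hP.2, he.eRk_eq])).symm

lemma closure_insert_mem_linesThrough (he : M.IsNonloop e) (hP : P ∈ points M) (heP : e ∉ P) :
    M.closure (insert e P) ∈ linesThrough M e := by
  refine ⟨isFlat_closure _, ?_, M.mem_closure_of_mem' (mem_insert e P) he.mem_ground⟩
  rw [eRk_closure_eq, eRk_insert_eq_add_one ⟨he.mem_ground, by rwa [hP.1.closure]⟩, hP.2,
    one_add_one_eq_two]

lemma exists_mem_linesThrough_of_mem_points (he : M.IsNonloop e) (hP : P ∈ points M)
    (hne : P ≠ M.closure {e}) : ∃ L ∈ linesThrough M e, P ⊆ L := by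
  have heP : e ∉ P := fun h ↦ hne (eq_closure_singleton_of_mem_points he hP h)
  exact ⟨_, closure_insert_mem_linesThrough he hP heP,
    M.subset_closure_of_subset' (subset_insert e P) hP.1.subset_ground⟩

lemma eps_le_one_add_sum_nPoints [M.Finite] (he : M.IsNonloop e) :
    eps M ≤ 1 + ∑ L ∈ (finite_linesThrough M e).toFinset, (nPoints M L - 1) := by
  classical
  set PF := (finite_points M).toFinset
  set LF := (finite_linesThrough M e).toFinset
  set P₀ := M.closure {e}
  set otherPointsOn : Set α → Finset (Set α) := fun L ↦ (PF.filter (· ⊆ L)).erase P₀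
  have hcard (L) (hL : L ∈ LF) : (otherPointsOn L).card = nPoints M L - 1 := by
    rw [Set.Finite.mem_toFinset] at hL
    rw [Finset.card_erase_of_mem, nPoints_eq_ncard, ← ncard_coe_finset]
    · simp [PF]
    · exact Finset.mem_filter.2 ⟨(finite_points M).mem_toFinset.2
        (closure_singleton_mem_points he), closure_singleton_subset_of_mem_linesThrough hL⟩
  have hcover : PF ⊆ insert P₀ (LF.biUnion otherPointsOn) := by
    intro P hP
    rcases eq_or_ne P P₀ with rfl | hne
    · exact Finset.mem_insert_self _ _
    obtain ⟨L, hL, hPL⟩ :=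
      exists_mem_linesThrough_of_mem_points he ((finite_points M).mem_toFinset.1 hP) hne
    exact Finset.mem_insert_of_mem <| Finset.mem_biUnion.2 ⟨L,
      (finite_linesThrough M e).mem_toFinset.2 hL,
      Finset.mem_erase.2 ⟨hne, Finset.mem_filter.2 ⟨hP, hPL⟩⟩⟩
  calc eps M = PF.card := by rw [eps_eq_ncard_points, ← ncard_coe_finset, Set.Finite.coe_toFinset]
    _ ≤ (insert P₀ (LF.biUnion otherPointsOn)).card := Finset.card_le_card hcover
    _ ≤ (LF.biUnion otherPointsOn).card + 1 := Finset.card_insert_le _ _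
    _ ≤ ∑ L ∈ LF, (otherPointsOn L).card + 1 := by grw [Finset.card_biUnion_le]
    _ = _ := by rw [add_comm, Finset.sum_congr rfl hcard]

lemma eps_le_of_forall_nPoints_le [M.Finite] (he : M.IsNonloop e) {a b m : ℕ}
    (hshort : ∀ L ∈ linesThrough M e, nPoints M L ≤ b + 1)
    (hlong : {L ∈ linesThrough M e | a + 2 ≤ nPoints M L}.ncard ≤ m) :
    eps M ≤ 1 + a * eps (M ／ {e}) + (b - a) * m := by
  classical
  set LF := (finite_linesThrough M e).toFinset
  have hterm (L) (hL : L ∈ LF) :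
      nPoints M L - 1 ≤ a + if a + 2 ≤ nPoints M L then b - a else 0 := by
    have hL' := hshort L ((finite_linesThrough M e).mem_toFinset.1 hL)
    split_ifs <;> omega
  have hLF : LF.card ≤ eps (M ／ {e}) := by
    rw [← ncard_coe_finset, Set.Finite.coe_toFinset]
    exact ncard_linesThrough_le_eps_contract he
  have hlongF : (LF.filter fun L ↦ a + 2 ≤ nPoints M L).card ≤ m := by
    simpa [LF, ← ncard_coe_finset] using hlong
  calc eps M ≤ 1 + ∑ L ∈ LF, (nPoints M L - 1) := eps_le_one_add_sum_nPoints he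
    _ ≤ 1 + ∑ L ∈ LF, (a + if a + 2 ≤ nPoints M L then b - a else 0) := by
        gcongr with L hL
        exact hterm L hL
    _ = 1 + a * LF.card + (b - a) * (LF.filter fun L ↦ a + 2 ≤ nPoints M L).card := by
        simp only [Finset.sum_add_distrib, Finset.sum_const, Finset.sum_ite, smul_eq_mul]
        ring
    _ ≤ 1 + a * eps (M ／ {e}) + (b - a) * m := by gcongr

lemma IsPrimePower.one_lt (hq : IsPrimePower q) : 1 < q := by
  obtain ⟨p, n, hp, hn, rfl⟩ := hq
  exact Nat.one_lt_pow hn.ne' hp.one_lt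

def overfullThreshold (q k r : ℕ) : ℚ :=
  ((q : ℚ) ^ (r + k) - 1) / ((q : ℚ) - 1) - (q : ℚ) * ((q : ℚ) ^ (2 * k) - 1) / ((q : ℚ) ^ 2 - 1)

lemma overfull_iff : Overfull M q k ↔ overfullThreshold q k (rank M) < eps M := Iff.rfl

lemma overfullThreshold_succ (hq : q ≠ 1) (k r : ℕ) :
    overfullThreshold q k (r + 1) = 1 + q * overfullThreshold q k r
      + ((q : ℚ) ^ 2 - q) * (((q : ℚ) ^ (2 * k) - 1) / ((q : ℚ) ^ 2 - 1)) := by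
  have h1 : (q : ℚ) - 1 ≠ 0 := sub_ne_zero.2 (by exact_mod_cast hq)
  have h2 : (q : ℚ) ^ 2 - 1 ≠ 0 := sub_ne_zero.2 (by exact_mod_cast (by simp [hq]))
  unfold overfullThreshold
  field_simp
  ring

lemma natCast_sum_pow_two_mul (hq : q ≠ 1) (k : ℕ) :
    ((∑ i ∈ Finset.range k, q ^ (2 * i) : ℕ) : ℚ) =
      ((q : ℚ) ^ (2 * k) - 1) / ((q : ℚ) ^ 2 - 1) := by
  push_cast
  simp_rw [pow_mul]
  exact geom_sum_eq (by exact_mod_cast (by simp [hq])) k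

lemma Overfull.contract_of_isLoop [M.Finite] (hM : Overfull M q k) (he : M.IsLoop e) :
    Overfull (contract M {e}) q k := by
  rw [overfull_iff, ← rank_contract_add_eRk {e}, he.eRk_eq, ENat.toNat_zero, add_zero] at hM
  exact hM.trans_le (by exact_mod_cast eps_le_eps_contract_of_isLoop he)

/-- If `e` is a `(q,k)`-critical element of a `(q,k)`-overfull matroid `M`, then
either `e` is on a line with at least `q²+2` points, or `e` is on at least
`(q^(2k)-1)/(q²-1) + 1` lines each with at least `q+2` points. -/
theorem statement_6 {α : Type*} (q k : ℕ) (hq : IsPrimePower q)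
    (M : Matroid α) [M.Finite] (hM : Overfull M q k) (e : α) (he : e ∈ M.E)
    (hcrit : ¬ Overfull (contract M {e}) q k) :
    (∃ L : Set α, M.IsFlat L ∧ eRk M L = 2 ∧ e ∈ L ∧ q ^ 2 + 2 ≤ nPoints M L) ∨
    ((q : ℚ) ^ (2 * k) - 1) / ((q : ℚ) ^ 2 - 1) + 1 ≤
      (({L : Set α | M.IsFlat L ∧ eRk M L = 2 ∧ e ∈ L ∧ q + 2 ≤ nPoints M L}).ncard : ℚ) := by
  have hq1 : q ≠ 1 := hq.one_lt.ne'
  by_contra! h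
  obtain ⟨hshort, hfew⟩ := h
  obtain hl | hnl := M.isLoop_or_isNonloop e
  · exact hcrit (hM.contract_of_isLoop hl)
  -- `D` is an integer, which turns the strict bound `< D + 1` on the long lines into `≤ D`.
  obtain ⟨D, hD⟩ : ∃ D : ℕ, (D : ℚ) = ((q : ℚ) ^ (2 * k) - 1) / ((q : ℚ) ^ 2 - 1) :=
    ⟨_, natCast_sum_pow_two_mul hq1 k⟩
  have hlong : {L ∈ linesThrough M e | q + 2 ≤ nPoints M L}.ncard ≤ D := by
    have hS : {L | M.IsFlat L ∧ eRk M L = 2 ∧ e ∈ L ∧ q + 2 ≤ nPoints M L} =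
        {L ∈ linesThrough M e | q + 2 ≤ nPoints M L} := by
      ext L
      simp [linesThrough, eRk_eq_matroid_eRk, and_assoc]
    rw [hS, ← hD] at hfew
    exact Nat.lt_succ_iff.1 (by exact_mod_cast hfew)
  have hcount := eps_le_of_forall_nPoints_le hnl (b := q ^ 2)
    (fun L hL ↦ Nat.le_of_lt_succ (hshort L hL.1 (by rw [eRk_eq_matroid_eRk, hL.2.1]) hL.2.2))
    hlong
  have hcountQ : (eps M : ℚ) ≤ 1 + q * eps (contract M {e}) + ((q : ℚ) ^ 2 - q) * D := by
    rw [← Nat.cast_pow, ← Nat.cast_sub (Nat.le_self_pow two_ne_zero q)]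
    exact_mod_cast hcount
  rw [overfull_iff, ← rank_contract_add_eRk {e}, hnl.eRk_eq, ENat.toNat_one,
    overfullThreshold_succ hq1, ← hD] at hM
  rw [overfull_iff, not_lt] at hcrit
  linarith [mul_le_mul_of_nonneg_left hcrit (Nat.cast_nonneg (α := ℚ) q)]

end GrowthRate
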